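/- Let γ = [[γ₁₁,γ₁₂],[γ₂₁,γ₂₂]] ∈ SL(2,ℝ), let x,y,z ∈ ℝ, let y₁,y₂ > 0, let k ∈ SO(3,ℝ), and set δ = |γ₂₁(x+iy₁)+γ₂₂| = √((γ₂₁x+γ₂₂)² + γ₂₁²y₁²) (which is positive). Then there exist x',y',z' ∈ ℝ and k' ∈ SO(3,ℝ) such that γ̃·u(x,y,z)·a_{y₁,y₂}·k = u(x',y',z')·a_{y₁/δ², y₂δ}·k', where γ̃ ∈ SL(3,ℝ) is the block-diagonal matrix with upper-left 2×2 block γ and lower-right entry 1. -/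

import Mathlib

open scoped Real

noncomputable section

/-- The upper-triangular unipotent matrix `u(x,y,z)`. -/
def uMat (x y z : ℝ) : Matrix (Fin 3) (Fin 3) ℝ :=
  !![1, x, z; 0, 1, y; 0, 0, 1]

/-- The diagonal matrix `a_{y₁,y₂} = diag(y₁^{2/3}y₂^{1/3}, y₁^{-1/3}y₂^{1/3}, y₁^{-1/3}y₂^{-2/3})`. -/
def aMat (y₁ y₂ : ℝ) : Matrix (Fin 3) (Fin 3) ℝ :=
  !![y₁ ^ ((2:ℝ)/3) * y₂ ^ ((1:ℝ)/3), 0, 0;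
     0, y₁ ^ (-(1:ℝ)/3) * y₂ ^ ((1:ℝ)/3), 0;
     0, 0, y₁ ^ (-(1:ℝ)/3) * y₂ ^ (-(2:ℝ)/3)]

/-!
Both `a`-matrices are the same scalar `y₁^(-1/3) y₂^(1/3)` times a diagonal matrix:
`a_{y₁,y₂}` gives `diag(y₁, 1, y₂⁻¹)` and `a_{y₁/δ², y₂δ}` gives `diag(y₁/δ, δ, y₂⁻¹)`. After
cancelling it, the claim is a polynomial identity whose upper-left `2 × 2` block is the Iwasawa
decomposition in `SL(2,ℝ)`: `γ · [[y₁, x], [0, 1]] = [[1, x'], [0, 1]] · diag(y₁/δ, δ) · R`, with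
`x' = Re(γ · (x + i y₁))` and `R` the rotation with cosine `(cx + d)/δ` and sine `cy₁/δ`.
-/

open Matrix

lemma aMat_eq_smul_diagonal {y₁ y₂ : ℝ} (h₁ : 0 < y₁) (h₂ : 0 < y₂) :
    aMat y₁ y₂ = (y₁ ^ (-(1:ℝ)/3) * y₂ ^ ((1:ℝ)/3)) • diagonal ![y₁, 1, y₂⁻¹] := by
  have hy₁ : y₁ ^ ((2:ℝ)/3) = y₁ ^ (-(1:ℝ)/3) * y₁ := by
    rw [← Real.rpow_add_one h₁.ne']; norm_num
  have hy₂ : y₂ ^ (-(2:ℝ)/3) = y₂ ^ ((1:ℝ)/3) * y₂⁻¹ := by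
    rw [← Real.rpow_neg_one, ← Real.rpow_add h₂]; norm_num
  ext i j
  fin_cases i <;> fin_cases j <;> simp [aMat, hy₁, hy₂] <;> ring

lemma aMat_div_sq_mul {y₁ y₂ δ : ℝ} (h₁ : 0 < y₁) (h₂ : 0 < y₂) (hδ : 0 < δ) :
    aMat (y₁ / δ ^ 2) (y₂ * δ) =
      (y₁ ^ (-(1:ℝ)/3) * y₂ ^ ((1:ℝ)/3)) • diagonal ![y₁ / δ, δ, y₂⁻¹] := by
  have key : (y₁ / δ ^ 2) ^ (-(1:ℝ)/3) * (y₂ * δ) ^ ((1:ℝ)/3) =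
      δ * (y₁ ^ (-(1:ℝ)/3) * y₂ ^ ((1:ℝ)/3)) := by
    calc _ = y₁ ^ (-(1:ℝ)/3) * y₂ ^ ((1:ℝ)/3) * (δ ^ ((1:ℝ)/3) / (δ ^ 2) ^ (-(1:ℝ)/3)) := by
          rw [Real.div_rpow h₁.le (by positivity), Real.mul_rpow h₂.le hδ.le]; ring
      _ = _ := by
          rw [← Real.rpow_natCast, ← Real.rpow_mul hδ.le, ← Real.rpow_sub hδ]; norm_num; ring
  rw [aMat_eq_smul_diagonal (by positivity) (by positivity), key]
  ext i j
  fin_cases i <;> fin_cases j <;> simp <;> field_simp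

def planeRotation (C S : ℝ) : Matrix (Fin 3) (Fin 3) ℝ :=
  !![C, -S, 0; S, C, 0; 0, 0, 1]

lemma planeRotation_mem_specialOrthogonalGroup {C S : ℝ} (h : C ^ 2 + S ^ 2 = 1) :
    planeRotation C S ∈ specialOrthogonalGroup (Fin 3) ℝ := by
  rw [mem_specialOrthogonalGroup_iff, mem_orthogonalGroup_iff]
  constructor
  · ext i j
    fin_cases i <;> fin_cases j <;>
      simp [planeRotation, mul_apply, Fin.sum_univ_three, one_apply] <;>
      ring_nf <;> linear_combination h
  · simp [planeRotation, det_fin_three]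
    linear_combination h

lemma sq_add_sq_pos_of_det_eq_one {a b c d x y₁ : ℝ} (hdet : a * d - b * c = 1) (h₁ : 0 < y₁) :
    0 < (c * x + d) ^ 2 + c ^ 2 * y₁ ^ 2 := by
  rcases eq_or_ne c 0 with rfl | hc
  · have hd : d ≠ 0 := by rintro rfl; simp at hdet
    simpa using sq_pos_of_ne_zero hd
  · positivity

lemma block_mul_uMat_mul_diagonal {a b c d x y z y₁ w δ : ℝ} (hdet : a * d - b * c = 1)
    (hδ : δ ≠ 0) (hδsq : δ ^ 2 = (c * x + d) ^ 2 + c ^ 2 * y₁ ^ 2) :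
    !![a, b, 0; c, d, 0; 0, 0, 1] * uMat x y z * diagonal ![y₁, 1, w] =
      uMat (((a * x + b) * (c * x + d) + a * c * y₁ ^ 2) / δ ^ 2) (c * z + d * y) (a * z + b * y) *
        diagonal ![y₁ / δ, δ, w] * planeRotation ((c * x + d) / δ) (c * y₁ / δ) := by
  ext i j
  fin_cases i <;> fin_cases j <;>
    simp [uMat, planeRotation, mul_apply, Fin.sum_univ_three, vecMul_diagonal] <;> field_simp
  · linear_combination (a * y₁) * hδsq + (y₁ * (c * x + d)) * hdet
  · linear_combination (a * x + b) * hδsq - (c * y₁ ^ 2) * hdet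

theorem statement3 (γ : Matrix (Fin 2) (Fin 2) ℝ) (hγ : γ.det = 1)
    (x y z y₁ y₂ : ℝ) (h₁ : 0 < y₁) (h₂ : 0 < y₂)
    (k : Matrix (Fin 3) (Fin 3) ℝ) (hk : k ∈ Matrix.specialOrthogonalGroup (Fin 3) ℝ) :
    0 < Real.sqrt ((γ 1 0 * x + γ 1 1) ^ 2 + (γ 1 0) ^ 2 * y₁ ^ 2) ∧
    ∃ (x' y' z' : ℝ) (k' : Matrix (Fin 3) (Fin 3) ℝ),
      k' ∈ Matrix.specialOrthogonalGroup (Fin 3) ℝ ∧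
      (!![γ 0 0, γ 0 1, 0; γ 1 0, γ 1 1, 0; 0, 0, 1] : Matrix (Fin 3) (Fin 3) ℝ) *
          uMat x y z * aMat y₁ y₂ * k =
        uMat x' y' z' *
          aMat (y₁ / (Real.sqrt ((γ 1 0 * x + γ 1 1) ^ 2 + (γ 1 0) ^ 2 * y₁ ^ 2)) ^ 2)
            (y₂ * Real.sqrt ((γ 1 0 * x + γ 1 1) ^ 2 + (γ 1 0) ^ 2 * y₁ ^ 2)) * k' := by
  rw [det_fin_two] at hγ
  set a := γ 0 0
  set b := γ 0 1
  set c := γ 1 0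
  set d := γ 1 1
  have hpos : 0 < (c * x + d) ^ 2 + c ^ 2 * y₁ ^ 2 := sq_add_sq_pos_of_det_eq_one hγ h₁
  set δ := Real.sqrt ((c * x + d) ^ 2 + c ^ 2 * y₁ ^ 2)
  have hδ : 0 < δ := Real.sqrt_pos.mpr hpos
  have hδsq : δ ^ 2 = (c * x + d) ^ 2 + c ^ 2 * y₁ ^ 2 := Real.sq_sqrt hpos.le
  have hrot : ((c * x + d) / δ) ^ 2 + (c * y₁ / δ) ^ 2 = 1 := by
    field_simp
    linear_combination -hδsq
  refine ⟨hδ, ((a * x + b) * (c * x + d) + a * c * y₁ ^ 2) / δ ^ 2, c * z + d * y, a * z + b * y,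
    _, mul_mem (planeRotation_mem_specialOrthogonalGroup hrot) hk, ?_⟩
  rw [aMat_eq_smul_diagonal h₁ h₂, aMat_div_sq_mul h₁ h₂ hδ, Matrix.mul_smul, Matrix.smul_mul,
    Matrix.mul_smul, block_mul_uMat_mul_diagonal hγ hδ.ne' hδsq, Matrix.smul_mul, Matrix.mul_assoc]
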